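/- arXiv:1203.3404 — 4 statements merged into one kernel-verified Lean document; each statement's English description precedes it below -/
import Mathlib

section
/- For 0 < |q| < 1 and x ∈ ℂ*, Jacobi's triple product identity holds: θ_q(x) = (q; q)_∞ (−x; q)_∞ (−q/x; q)_∞, where θ_q(x) = Σ_{n∈ℤ} q^{n(n-1)/2} x^n. -/
/-!
Write `P_N(x) = (-x;q)_N (-q/x;q)_N`. Expanding `P_{N+1} = P_N (1 + x q^N)(1 + q^{N+1}/x)`
coefficientwise gives the finite triple product
`P_N(x) = Σ_n [2N, N+n]_q q^{n(n-1)/2} x^n`, because the Gaussian binomials satisfy the matching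
three-term recurrence. As `N → ∞`, each `[2N, N+n]_q` tends to `1/(q;q)_∞` while staying
uniformly bounded, so Tannery's theorem lets us pass to the limit termwise.
-/

/-- Jacobi theta function `θ_q(x) = Σ_{n∈ℤ} q^{n(n-1)/2} x^n`. -/
noncomputable def jTheta (q x : ℂ) : ℂ := ∑' n : ℤ, q ^ (n * (n - 1) / 2) * x ^ n

/-- Infinite q-Pochhammer symbol `(a;q)_∞ = Π_{n≥0} (1 - a q^n)`. -/
noncomputable def qPochInf (a q : ℂ) : ℂ := ∏' n : ℕ, (1 - a * q ^ n)

open Finset Filter Topology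

noncomputable def qPoch (a q : ℂ) (m : ℕ) : ℂ := ∏ j ∈ range m, (1 - a * q ^ j)

section QPochhammer

variable {a q : ℂ}

lemma qPoch_zero : qPoch a q 0 = 1 := prod_range_zero _

lemma qPoch_succ (m : ℕ) : qPoch a q (m + 1) = qPoch a q m * (1 - a * q ^ m) :=
  prod_range_succ _ m

lemma one_sub_mul_pow_ne_zero (ha : ‖a‖ < 1) (hq : ‖q‖ ≤ 1) (j : ℕ) : 1 - a * q ^ j ≠ 0 := by
  refine sub_ne_zero.2 (fun h => ?_)
  have : ‖a * q ^ j‖ < 1 := by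
    rw [norm_mul, norm_pow]
    exact mul_lt_one_of_nonneg_of_lt_one_left (norm_nonneg a) ha (pow_le_one₀ (norm_nonneg q) hq)
  rw [← h, norm_one] at this
  exact this.false

lemma summable_norm_mul_pow (a : ℂ) (hq : ‖q‖ < 1) : Summable fun n : ℕ => ‖a * q ^ n‖ := by
  simpa only [norm_mul, norm_pow] using
    (summable_geometric_of_lt_one (norm_nonneg q) hq).mul_left ‖a‖

lemma tendsto_qPoch (a : ℂ) (hq : ‖q‖ < 1) :
    Tendsto (qPoch a q) atTop (𝓝 (qPochInf a q)) := by
  have h := (multipliable_one_add_of_summable (f := fun n => -(a * q ^ n))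
    (by simpa only [norm_neg] using summable_norm_mul_pow a hq)).hasProd.tendsto_prod_nat
  simp only [← sub_eq_add_neg] at h
  exact h

lemma qPochInf_ne_zero (ha : ‖a‖ < 1) (hq : ‖q‖ < 1) : qPochInf a q ≠ 0 := by
  have h := tprod_one_add_ne_zero_of_summable (f := fun n => -(a * q ^ n))
    (fun n => by rw [← sub_eq_add_neg]; exact one_sub_mul_pow_ne_zero ha hq.le n)
    (by simpa only [norm_neg] using summable_norm_mul_pow a hq)
  simpa only [qPochInf, ← sub_eq_add_neg] using h

end QPochhammer

/-- `1 / (q;q)_m`, extended by zero to `m < 0` (like `1/Γ` at its poles). With this convention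
`qPochInv_sub_one` holds for every `m`, so the recurrence below has no boundary cases. -/
noncomputable def qPochInv (q : ℂ) (m : ℤ) : ℂ := if 0 ≤ m then (qPoch q q m.toNat)⁻¹ else 0

/-- The Gaussian binomial coefficient `[2N, N+n]_q`, which vanishes for `|n| > N`. -/
noncomputable def qBinomCentral (q : ℂ) (N : ℕ) (n : ℤ) : ℂ :=
  qPoch q q (2 * N) * qPochInv q (N + n) * qPochInv q (N - n)

section QBinomial

variable {q : ℂ}

lemma qPochInv_natCast (m : ℕ) : qPochInv q m = (qPoch q q m)⁻¹ := by simp [qPochInv]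

lemma qPochInv_of_neg {m : ℤ} (hm : m < 0) : qPochInv q m = 0 := if_neg (not_le.2 hm)

lemma qPochInv_sub_one (hq : ‖q‖ < 1) (m : ℤ) :
    qPochInv q (m - 1) = (1 - q ^ m) * qPochInv q m := by
  match m with
  | 0 => simp [qPochInv_of_neg]
  | (k + 1 : ℕ) =>
    rw [Nat.cast_succ, add_sub_cancel_right, ← Nat.cast_succ, qPochInv_natCast, qPochInv_natCast,
      qPoch_succ, zpow_natCast, pow_succ', mul_inv, mul_left_comm,
      mul_inv_cancel₀ (one_sub_mul_pow_ne_zero hq hq.le k), mul_one]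
  | .negSucc k =>
    rw [qPochInv_of_neg (Int.negSucc_lt_zero k), qPochInv_of_neg (by omega), mul_zero]

lemma qBinomCentral_succ (hq0 : q ≠ 0) (hq1 : ‖q‖ < 1) (N : ℕ) (n : ℤ) :
    qBinomCentral q (N + 1) n = (1 + q ^ (2 * N + 1)) * qBinomCentral q N n
      + q ^ ((N : ℤ) + 1 - n) * qBinomCentral q N (n - 1)
      + q ^ ((N : ℤ) + 1 + n) * qBinomCentral q N (n + 1) := by
  have hstep := qPochInv_sub_one hq1
  have hA₁ : qPochInv q (N + n) = (1 - q ^ ((N : ℤ) + n + 1)) * qPochInv q (N + n + 1) := by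
    simpa using hstep (N + n + 1)
  have hB₁ : qPochInv q (N - n) = (1 - q ^ ((N : ℤ) - n + 1)) * qPochInv q (N - n + 1) := by
    simpa using hstep (N - n + 1)
  have hq2N : q ^ (2 * N) = q ^ ((N : ℤ) + n) * q ^ ((N : ℤ) - n) := by
    rw [← zpow_add₀ hq0, show (N : ℤ) + n + (N - n) = ((2 * N : ℕ) : ℤ) by push_cast; ring,
      zpow_natCast]
  -- Everything becomes a multiple of `qPochInv q (N + n + 1) * qPochInv q (N - n + 1)`, and
  -- what remains is a polynomial identity in `q`, `q ^ (N + n)` and `q ^ (N - n)`.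
  simp only [qBinomCentral]
  rw [show ((N + 1 : ℕ) : ℤ) + n = N + n + 1 by push_cast; ring,
    show ((N + 1 : ℕ) : ℤ) - n = N - n + 1 by push_cast; ring,
    show (N : ℤ) + (n - 1) = N + n - 1 by ring, show (N : ℤ) - (n - 1) = N - n + 1 by ring,
    show (N : ℤ) + (n + 1) = N + n + 1 by ring, show (N : ℤ) - (n + 1) = N - n - 1 by ring,
    show (N : ℤ) + 1 + n = N + n + 1 by ring, show (N : ℤ) + 1 - n = N - n + 1 by ring,
    hstep (N + n), hstep (N - n), hA₁, hB₁, show 2 * (N + 1) = 2 * N + 1 + 1 by ring,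
    qPoch_succ, qPoch_succ, zpow_add_one₀ hq0, zpow_add_one₀ hq0, pow_succ, hq2N]
  ring

end QBinomial

noncomputable def thetaTerm (q x : ℂ) (n : ℤ) : ℂ := q ^ (n * (n - 1) / 2) * x ^ n

section ThetaSeries

variable {q x : ℂ}

lemma thetaTerm_add_one (hq : q ≠ 0) (hx : x ≠ 0) (n : ℤ) :
    thetaTerm q x (n + 1) = q ^ n * x * thetaTerm q x n := by
  have h : (n + 1) * (n + 1 - 1) / 2 = n * (n - 1) / 2 + n := by
    rw [show (n + 1) * (n + 1 - 1) = n * (n - 1) + n * 2 by ring,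
      Int.add_mul_ediv_right _ _ two_ne_zero]
  rw [thetaTerm, thetaTerm, h, zpow_add₀ hq, zpow_add_one₀ hx]
  ring

lemma thetaTerm_sub_one (hq : q ≠ 0) (hx : x ≠ 0) (n : ℤ) :
    thetaTerm q x (n - 1) = q ^ (1 - n) * x⁻¹ * thetaTerm q x n := by
  rw [← sub_add_cancel n 1, thetaTerm_add_one hq hx, add_sub_cancel_right,
    show 1 - (n - 1 + 1) = -(n - 1) by ring, zpow_neg]
  field_simp

lemma summable_norm_thetaTerm (hq0 : q ≠ 0) (hq1 : ‖q‖ < 1) (hx : x ≠ 0) :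
    Summable fun n : ℤ => ‖thetaTerm q x n‖ := by
  have hθ (n : ℤ) : ‖thetaTerm q x n‖ ≠ 0 :=
    norm_ne_zero_iff.2 (mul_ne_zero (zpow_ne_zero _ hq0) (zpow_ne_zero _ hx))
  have hpow := tendsto_pow_atTop_nhds_zero_of_lt_one (norm_nonneg q) hq1
  refine Summable.of_nat_of_neg ?_ ?_
  · refine summable_of_ratio_test_tendsto_lt_one zero_lt_one (.of_forall fun n => hθ n) ?_
    have h (n : ℕ) : ‖‖thetaTerm q x (n + 1 : ℕ)‖‖ / ‖‖thetaTerm q x n‖‖ = ‖q‖ ^ n * ‖x‖ := by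
      rw [norm_norm, norm_norm, Nat.cast_succ, thetaTerm_add_one hq0 hx, norm_mul, norm_mul,
        norm_zpow, zpow_natCast, mul_div_cancel_right₀ _ (hθ n)]
    simpa only [h, zero_mul] using hpow.mul_const ‖x‖
  · refine summable_of_ratio_test_tendsto_lt_one zero_lt_one (.of_forall fun n => hθ _) ?_
    have h (n : ℕ) :
        ‖‖thetaTerm q x (-(n + 1 : ℕ))‖‖ / ‖‖thetaTerm q x (-n)‖‖ = ‖q‖ ^ n * (‖q‖ * ‖x‖⁻¹) := by
      rw [norm_norm, norm_norm, Nat.cast_succ, neg_add, ← sub_eq_add_neg,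
        thetaTerm_sub_one hq0 hx, norm_mul, norm_mul, mul_div_cancel_right₀ _ (hθ _),
        show 1 - -(n : ℤ) = (n + 1 : ℕ) by push_cast; ring, norm_zpow, zpow_natCast, norm_inv,
        pow_succ, mul_assoc]
    simpa only [h, zero_mul] using hpow.mul_const (‖q‖ * ‖x‖⁻¹)

lemma hasSum_qBinomCentral_mul_thetaTerm (hq0 : q ≠ 0) (hq1 : ‖q‖ < 1) (hx : x ≠ 0) (N : ℕ) :
    HasSum (fun n => qBinomCentral q N n * thetaTerm q x n)
      (qPoch (-x) q N * qPoch (-q / x) q N) := by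
  induction N with
  | zero =>
    rw [qPoch_zero, qPoch_zero, mul_one]
    convert hasSum_single (0 : ℤ) fun n hn => ?_ using 1
    · simp [qBinomCentral, thetaTerm, qPochInv, qPoch_zero]
    · rcases hn.lt_or_gt with h | h
      · simp [qBinomCentral, qPochInv_of_neg h]
      · simp [qBinomCentral, qPochInv_of_neg (neg_neg_of_pos h)]
  | succ N ih =>
    have h₁ := ih.mul_left (1 + q ^ (2 * N + 1))
    have h₂ := (Equiv.subRight (1 : ℤ)).hasSum_iff.2 (ih.mul_left (x * q ^ N))
    have h₃ := (Equiv.addRight (1 : ℤ)).hasSum_iff.2 (ih.mul_left (q ^ (N + 1) * x⁻¹))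
    have hprod : qPoch (-x) q (N + 1) * qPoch (-q / x) q (N + 1) =
        (1 + q ^ (2 * N + 1)) * (qPoch (-x) q N * qPoch (-q / x) q N)
          + x * q ^ N * (qPoch (-x) q N * qPoch (-q / x) q N)
          + q ^ (N + 1) * x⁻¹ * (qPoch (-x) q N * qPoch (-q / x) q N) := by
      rw [qPoch_succ, qPoch_succ]
      field_simp
      ring
    rw [hprod]
    refine ((h₁.add h₂).add h₃).congr_fun fun n => ?_
    simp only [Function.comp_apply, Equiv.subRight_apply, Equiv.coe_addRight]
    rw [qBinomCentral_succ hq0 hq1, thetaTerm_sub_one hq0 hx, thetaTerm_add_one hq0 hx,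
      show (N : ℤ) + 1 - n = N + (1 - n) by ring,
      show (N : ℤ) + 1 + n = (N + 1 : ℕ) + n by push_cast; ring,
      zpow_add₀ hq0, zpow_add₀ hq0, zpow_natCast, zpow_natCast]
    field_simp

end ThetaSeries

section Limit

variable {q : ℂ}

lemma exists_norm_qPochInv_le (hq : ‖q‖ < 1) : ∃ C, ∀ m, ‖qPochInv q m‖ ≤ C := by
  obtain ⟨C, hC⟩ := ((tendsto_qPoch q hq).inv₀ (qPochInf_ne_zero hq hq)).norm.bddAbove_range
  have hC' (m : ℕ) : ‖(qPoch q q m)⁻¹‖ ≤ C := hC ⟨m, rfl⟩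
  refine ⟨C, fun m => ?_⟩
  unfold qPochInv
  split_ifs
  · exact hC' _
  · simpa using (norm_nonneg _).trans (hC' 0)

lemma exists_norm_qBinomCentral_le (hq : ‖q‖ < 1) : ∃ C, ∀ N n, ‖qBinomCentral q N n‖ ≤ C := by
  obtain ⟨B, hB⟩ := (tendsto_qPoch q hq).norm.bddAbove_range
  have hB' (m : ℕ) : ‖qPoch q q m‖ ≤ B := hB ⟨m, rfl⟩
  obtain ⟨C, hC⟩ := exists_norm_qPochInv_le hq
  have hB₀ : 0 ≤ B := (norm_nonneg _).trans (hB' 0)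
  have hC₀ : 0 ≤ C := (norm_nonneg _).trans (hC 0)
  refine ⟨B * C * C, fun N n => ?_⟩
  rw [qBinomCentral, norm_mul, norm_mul]
  exact mul_le_mul (mul_le_mul (hB' _) (hC _) (norm_nonneg _) hB₀) (hC _) (norm_nonneg _)
    (mul_nonneg hB₀ hC₀)

lemma tendsto_qPochInv_natCast_add (hq : ‖q‖ < 1) (n : ℤ) :
    Tendsto (fun N : ℕ => qPochInv q (N + n)) atTop (𝓝 (qPochInf q q)⁻¹) := by
  have hidx : Tendsto (fun N : ℕ => ((N : ℤ) + n).toNat) atTop atTop :=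
    tendsto_atTop_atTop.2 fun b => ⟨b + n.natAbs, fun N hN => by omega⟩
  refine (((tendsto_qPoch q hq).inv₀ (qPochInf_ne_zero hq hq)).comp hidx).congr' ?_
  filter_upwards [eventually_ge_atTop n.natAbs] with N hN
  exact (if_pos (by omega)).symm

lemma tendsto_qBinomCentral (hq : ‖q‖ < 1) (n : ℤ) :
    Tendsto (fun N => qBinomCentral q N n) atTop (𝓝 (qPochInf q q)⁻¹) := by
  have h := (((tendsto_qPoch q hq).comp (tendsto_id.const_mul_atTop' two_pos)).mul
    (tendsto_qPochInv_natCast_add hq n)).mul (tendsto_qPochInv_natCast_add hq (-n))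
  rw [mul_inv_cancel₀ (qPochInf_ne_zero hq hq), one_mul] at h
  simpa only [qBinomCentral, sub_eq_add_neg, Function.comp_def, id] using h

end Limit

/-- Jacobi's triple product identity. -/
theorem jacobi_triple_product (q x : ℂ) (hq0 : 0 < ‖q‖) (hq1 : ‖q‖ < 1) (hx : x ≠ 0) :
    jTheta q x = qPochInf q q * qPochInf (-x) q * qPochInf (-q / x) q := by
  have hq : q ≠ 0 := norm_pos_iff.1 hq0
  obtain ⟨C, hC⟩ := exists_norm_qBinomCentral_le hq1
  have hpartial : Tendsto (fun N => qPoch (-x) q N * qPoch (-q / x) q N) atTop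
      (𝓝 ((qPochInf q q)⁻¹ * jTheta q x)) := by
    have h := tendsto_tsum_of_dominated_convergence
      (f := fun N n => qBinomCentral q N n * thetaTerm q x n)
      ((summable_norm_thetaTerm hq hq1 hx).mul_left C)
      (fun n => (tendsto_qBinomCentral hq1 n).mul_const (thetaTerm q x n))
      (.of_forall fun N n => by
        rw [norm_mul]; exact mul_le_mul_of_nonneg_right (hC N n) (norm_nonneg _))
    simp only [(hasSum_qBinomCentral_mul_thetaTerm hq hq1 hx _).tsum_eq, tsum_mul_left] at h
    exact h
  have hlim := tendsto_nhds_unique ((tendsto_qPoch (-x) hq1).mul (tendsto_qPoch (-q / x) hq1))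
    hpartial
  rw [mul_assoc, hlim, mul_inv_cancel_left₀ (qPochInf_ne_zero hq1 hq1)]
end

section
/- Let 0 < |q| < 1 and suppose u(x) satisfies the q-Airy equation u(q²x) + x u(qx) − u(x) = 0 on ℂ*. Then the function v(x) = (θ_q(q²x)/θ_q(−q²x)) · u(−x) also satisfies the same equation, wherever θ_q(−q²x) ≠ 0. -/
noncomputable def thetaRatio (q y : ℂ) : ℂ := jTheta q (q ^ 2 * y) / jTheta q (-(q ^ 2 * y))

lemma jTheta_mul_left {q : ℂ} (hq : q ≠ 0) {y : ℂ} (hy : y ≠ 0) :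
    jTheta q (q * y) = y⁻¹ * jTheta q y := by
  unfold jTheta
  rw [← tsum_mul_left,
    ← (Equiv.addRight (1 : ℤ)).tsum_eq fun n : ℤ => y⁻¹ * (q ^ (n * (n - 1) / 2) * y ^ n)]
  refine tsum_congr fun n => ?_
  have hexp : (n + 1) * (n + 1 - 1) / 2 = n * (n - 1) / 2 + n := by
    rw [show (n + 1) * (n + 1 - 1) = n * (n - 1) + n * 2 by ring,
      Int.add_mul_ediv_right _ _ two_ne_zero]
  rw [Equiv.coe_addRight, hexp, zpow_add₀ hq, mul_zpow, zpow_add_one₀ hy]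
  field_simp

lemma thetaRatio_mul_left {q : ℂ} (hq : q ≠ 0) {y : ℂ} (hy : y ≠ 0) :
    thetaRatio q (q * y) = -thetaRatio q y := by
  have hqy : q ^ 2 * y ≠ 0 := mul_ne_zero (pow_ne_zero 2 hq) hy
  unfold thetaRatio
  rw [show q ^ 2 * (q * y) = q * (q ^ 2 * y) by ring, ← mul_neg,
    jTheta_mul_left hq hqy, jTheta_mul_left hq (neg_ne_zero.mpr hqy), inv_neg, neg_mul, div_neg,
    mul_div_mul_left _ _ (inv_ne_zero hqy)]

theorem qAiry_mul_neg_of_antiperiodic {q : ℂ} (hq : q ≠ 0) {u r : ℂ → ℂ}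
    (hu : ∀ x : ℂ, x ≠ 0 → u (q ^ 2 * x) + x * u (q * x) - u x = 0)
    (hr : ∀ y : ℂ, y ≠ 0 → r (q * y) = -r y) {x : ℂ} (hx : x ≠ 0) :
    r (q ^ 2 * x) * u (-(q ^ 2 * x)) + x * (r (q * x) * u (-(q * x))) - r x * u (-x) = 0 := by
  have hr_sq : r (q ^ 2 * x) = r x := by
    rw [sq, mul_assoc, hr _ (mul_ne_zero hq hx), hr _ hx, neg_neg]
  have hu_neg := hu (-x) (neg_ne_zero.mpr hx)
  rw [mul_neg, mul_neg] at hu_neg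
  rw [hr_sq, hr _ hx]
  linear_combination r x * hu_neg

theorem qAiry_second_solution_general (q : ℂ) (hq0 : 0 < ‖q‖)
    (u : ℂ → ℂ) (hu : ∀ x : ℂ, x ≠ 0 → u (q ^ 2 * x) + x * u (q * x) - u x = 0) :
    ∀ x : ℂ, x ≠ 0 → jTheta q (-(q ^ 2 * x)) ≠ 0 →
      (fun y => jTheta q (q ^ 2 * y) / jTheta q (-(q ^ 2 * y)) * u (-y)) (q ^ 2 * x)
        + x * (fun y => jTheta q (q ^ 2 * y) / jTheta q (-(q ^ 2 * y)) * u (-y)) (q * x)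
        - (fun y => jTheta q (q ^ 2 * y) / jTheta q (-(q ^ 2 * y)) * u (-y)) x = 0 := by
  intro x hx _
  have hq : q ≠ 0 := norm_pos_iff.mp hq0
  exact qAiry_mul_neg_of_antiperiodic hq hu (fun _ hy => thetaRatio_mul_left hq hy) hx

theorem qAiry_second_solution (q : ℂ) (hq0 : 0 < ‖q‖) (hq1 : ‖q‖ < 1)
    (u : ℂ → ℂ) (hu : ∀ x : ℂ, x ≠ 0 → u (q ^ 2 * x) + x * u (q * x) - u x = 0) :
    ∀ x : ℂ, x ≠ 0 → jTheta q (-(q ^ 2 * x)) ≠ 0 →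
      (fun y => jTheta q (q ^ 2 * y) / jTheta q (-(q ^ 2 * y)) * u (-y)) (q ^ 2 * x)
        + x * (fun y => jTheta q (q ^ 2 * y) / jTheta q (-(q ^ 2 * y)) * u (-y)) (q * x)
        - (fun y => jTheta q (q ^ 2 * y) / jTheta q (-(q ^ 2 * y)) * u (-y)) x = 0 :=
  qAiry_second_solution_general q hq0 u hu
end

section
/- For 0 < |q| < 1 and all x ∈ ℂ, the q-exponential function E_q(x) = Σ_{n≥0} q^{n(n−1)/2} x^n/(q;q)_n equals the infinite product (−x; q)_∞. -/
/-!
Write `E_q(x) = ∑ aₙ xⁿ` with `aₙ = q^{n(n-1)/2} / (q;q)ₙ`. The recursion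
`aₙ₊₁ (1 - q^{n+1}) = qⁿ aₙ` gives the functional equation `E_q(x) = (1 + x) E_q(qx)`, and
iterating it, `E_q(x) = (∏_{k<N} (1 + x q^k)) E_q(q^N x)`. As `N → ∞`, `q^N x → 0` and `E_q` is
continuous at `0` with `E_q(0) = 1`, while the partial products converge to `(-x; q)_∞`.
-/

/-- Finite q-Pochhammer symbol `(q;q)_n`. -/
noncomputable def qPochQ (q : ℂ) (n : ℕ) : ℂ := ∏ k ∈ Finset.range n, (1 - q ^ (k + 1))

/-- The q-exponential `E_q(x) = Σ_{n≥0} q^{n(n−1)/2} x^n/(q;q)_n`. -/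
noncomputable def qExp_E (q x : ℂ) : ℂ := ∑' n : ℕ, q ^ (n * (n - 1) / 2) * x ^ n / qPochQ q n

open Filter Topology Finset

variable {q : ℂ}

lemma one_sub_pow_ne_zero_of_norm_lt_one (hq : ‖q‖ < 1) {n : ℕ} (hn : n ≠ 0) :
    1 - q ^ n ≠ 0 := by
  rw [sub_ne_zero]
  intro h
  have h' := congrArg norm h
  rw [norm_one, norm_pow] at h'
  exact (pow_lt_one₀ (norm_nonneg q) hq hn).ne' h'

lemma qPochQ_succ (q : ℂ) (n : ℕ) : qPochQ q (n + 1) = qPochQ q n * (1 - q ^ (n + 1)) :=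
  prod_range_succ _ _

lemma qPochQ_ne_zero (hq : ‖q‖ < 1) (n : ℕ) : qPochQ q n ≠ 0 :=
  prod_ne_zero_iff.mpr fun k _ => one_sub_pow_ne_zero_of_norm_lt_one hq k.add_one_ne_zero

noncomputable def qExpCoeff (q : ℂ) (n : ℕ) : ℂ := q ^ (n * (n - 1) / 2) / qPochQ q n

lemma qExp_E_eq_tsum (q x : ℂ) : qExp_E q x = ∑' n, qExpCoeff q n * x ^ n := by
  simp only [qExp_E, qExpCoeff, mul_div_right_comm]

lemma qExpCoeff_zero (q : ℂ) : qExpCoeff q 0 = 1 := by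
  simp [qExpCoeff, qPochQ]

lemma qExpCoeff_succ_mul (hq : ‖q‖ < 1) (n : ℕ) :
    qExpCoeff q (n + 1) * (1 - q ^ (n + 1)) = q ^ n * qExpCoeff q n := by
  rw [qExpCoeff, qExpCoeff, qPochQ_succ, Nat.triangle_succ, pow_add]
  field_simp [qPochQ_ne_zero hq n, one_sub_pow_ne_zero_of_norm_lt_one hq n.add_one_ne_zero]

lemma summable_norm_qExpCoeff_mul_pow (hq : ‖q‖ < 1) (x : ℂ) :
    Summable fun n => ‖qExpCoeff q n * x ^ n‖ := by
  have hden : Tendsto (fun n : ℕ => ‖1 - q ^ (n + 1)‖) atTop (𝓝 1) := by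
    have h := (tendsto_pow_atTop_nhds_zero_of_norm_lt_one hq).comp (tendsto_add_atTop_nat 1)
    simpa [Function.comp_def] using (tendsto_const_nhds (x := (1 : ℂ))).sub h |>.norm
  have hratio : Tendsto (fun n : ℕ => ‖q‖ ^ n * ‖x‖ / ‖1 - q ^ (n + 1)‖) atTop (𝓝 0) := by
    have h := ((tendsto_pow_atTop_nhds_zero_of_lt_one (norm_nonneg q) hq).mul_const
      ‖x‖).div hden one_ne_zero
    rwa [zero_mul, zero_div] at h
  refine summable_of_ratio_norm_eventually_le one_half_lt_one ?_
  filter_upwards [hratio.eventually_le_const one_half_pos] with n hn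
  have hrec : qExpCoeff q (n + 1) * x ^ (n + 1) =
      q ^ n * x / (1 - q ^ (n + 1)) * (qExpCoeff q n * x ^ n) := by
    rw [eq_div_of_mul_eq (one_sub_pow_ne_zero_of_norm_lt_one hq n.add_one_ne_zero)
      (qExpCoeff_succ_mul hq n)]
    ring
  rw [norm_norm, norm_norm, hrec, norm_mul _ (qExpCoeff q n * x ^ n), norm_div, norm_mul,
    norm_pow]
  gcongr

lemma tendsto_qExp_E_nhds_zero (hq : ‖q‖ < 1) : Tendsto (qExp_E q) (𝓝 0) (𝓝 1) := by
  have hbound : ∀ᶠ y in 𝓝 (0 : ℂ), ∀ n, ‖qExpCoeff q n * y ^ n‖ ≤ ‖qExpCoeff q n * 1 ^ n‖ := by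
    filter_upwards [Metric.closedBall_mem_nhds (0 : ℂ) one_pos] with y hy n
    rw [mem_closedBall_zero_iff] at hy
    rw [norm_mul, norm_mul, norm_pow, norm_pow, norm_one]
    gcongr
  have h := tendsto_tsum_of_dominated_convergence (summable_norm_qExpCoeff_mul_pow hq 1)
    (fun n => ((continuous_pow n).tendsto 0).const_mul (qExpCoeff q n)) hbound
  rwa [tsum_eq_single 0 fun n hn => by simp [hn], pow_zero, mul_one, qExpCoeff_zero,
    ← funext (qExp_E_eq_tsum q)] at h

lemma qExp_E_eq_one_add_mul (hq : ‖q‖ < 1) (x : ℂ) :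
    qExp_E q x = (1 + x) * qExp_E q (q * x) := by
  have hx := (summable_norm_qExpCoeff_mul_pow hq x).of_norm
  have hqx := (summable_norm_qExpCoeff_mul_pow hq (q * x)).of_norm
  have hdiff : qExp_E q x - qExp_E q (q * x) = x * qExp_E q (q * x) := by
    rw [qExp_E_eq_tsum, qExp_E_eq_tsum, ← hx.tsum_sub hqx, (hx.sub hqx).tsum_eq_zero_add,
      ← tsum_mul_left]
    simp only [pow_zero, mul_one, sub_self, zero_add]
    congr 1
    funext n
    calc qExpCoeff q (n + 1) * x ^ (n + 1) - qExpCoeff q (n + 1) * (q * x) ^ (n + 1)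
        = qExpCoeff q (n + 1) * (1 - q ^ (n + 1)) * x ^ (n + 1) := by ring
      _ = x * (qExpCoeff q n * (q * x) ^ n) := by rw [qExpCoeff_succ_mul hq]; ring
  linear_combination hdiff

lemma qExp_E_eq_prod_range_mul (hq : ‖q‖ < 1) (x : ℂ) (N : ℕ) :
    qExp_E q x = (∏ k ∈ range N, (1 + x * q ^ k)) * qExp_E q (q ^ N * x) := by
  induction N with
  | zero => simp
  | succ N ih =>
    rw [ih, qExp_E_eq_one_add_mul hq (q ^ N * x), prod_range_succ,
      show q * (q ^ N * x) = q ^ (N + 1) * x by ring]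
    ring

theorem qExp_E_eq_prod_general (q : ℂ) (hq1 : ‖q‖ < 1) (x : ℂ) :
    qExp_E q x = ∏' n : ℕ, (1 + x * q ^ n) := by
  have hsum : Summable fun n : ℕ => ‖x * q ^ n‖ := by
    simpa [norm_mul, norm_pow] using
      (summable_geometric_of_lt_one (norm_nonneg q) hq1).mul_left ‖x‖
  have hprod := (multipliable_one_add_of_summable hsum).tendsto_prod_tprod_nat
  have htail : Tendsto (fun N => qExp_E q (q ^ N * x)) atTop (𝓝 1) :=
    (tendsto_qExp_E_nhds_zero hq1).comp <| by
      simpa using (tendsto_pow_atTop_nhds_zero_of_norm_lt_one hq1).mul_const x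
  have hlim := hprod.mul htail
  rw [mul_one, ← funext (qExp_E_eq_prod_range_mul hq1 x)] at hlim
  exact tendsto_nhds_unique tendsto_const_nhds hlim

theorem qExp_E_eq_prod (q : ℂ) (hq0 : 0 < ‖q‖) (hq1 : ‖q‖ < 1) (x : ℂ) :
    qExp_E q x = ∏' n : ℕ, (1 + x * q ^ n) :=
  qExp_E_eq_prod_general q hq1 x
end

section
/- For 0 < |q| < 1 and |x| < 1 with x ∉ q^ℤ (so that θ_q(−x) ≠ 0 makes sense and x avoids the zero spiral), the connection formula e_q(x) = ((q;q)_∞ / θ_q(−x)) · E_q(−q/x) holds, relating the two q-exponentials at x and q/x. -/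
/-- The q-exponential `e_q(x)`. -/
noncomputable def qExp_e (q x : ℂ) : ℂ := ∑' n : ℕ, x ^ n / qPochQ q n

/-- Infinite q-Pochhammer symbol `(q;q)_∞`. -/
noncomputable def qPochQInf (q : ℂ) : ℂ := ∏' n : ℕ, (1 - q ^ (n + 1))

/-!
Multiplying `e_q(x)` by `θ_q(-x)` and collecting terms, the coefficient of
`q^(m(m-1)/2) (-x)^m` is `E_q(-q^(1-m))`. The functional equation `E_q(z) = (1 + z) E_q(qz)`
makes it vanish for `m ≥ 1` and equal `E_q(-q) / (q;q)_n` for `m = -n`, so the product is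
`E_q(-q) E_q(-q/x)`. Iterating the same equation gives `E_q(-q) = (q;q)_∞`, and shows that
`E_q(z) ≠ 0` unless `z = -q^(-k)`, which forces `θ_q(-x) ≠ 0` since `x` avoids the spiral.
-/

open Filter Topology

theorem summable_norm_of_succ_eq_mul {𝕜 : Type*} [NormedDivisionRing 𝕜] {f g : ℕ → 𝕜} {L : 𝕜}
    (hL : ‖L‖ < 1) (hg : Tendsto g atTop (𝓝 L)) (hf : ∀ n, f (n + 1) = g n * f n) :
    Summable (‖f ·‖) := by
  obtain ⟨r, hLr, hr⟩ := exists_between hL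
  refine summable_of_ratio_norm_eventually_le hr ?_
  filter_upwards [hg.norm.eventually (gt_mem_nhds hLr)] with n hn
  rw [norm_norm, norm_norm, hf, norm_mul]
  gcongr

theorem tsum_mul_tsum_eq_tsum_tsum_sub {R : Type*} [NormedRing R] [CompleteSpace R]
    {a : ℕ → R} {b : ℤ → R} (ha : Summable (‖a ·‖)) (hb : Summable (‖b ·‖)) :
    (∑' k, a k) * (∑' n, b n) = ∑' m : ℤ, ∑' k : ℕ, a k * b (m - k) := by
  let shear : ℤ × ℕ ≃ ℕ × ℤ :=
    (Equiv.prodComm ℤ ℕ).trans (Equiv.prodShear (Equiv.refl ℕ) fun k ↦ Equiv.subRight (k : ℤ))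
  have hsum : Summable fun p : ℤ × ℕ ↦ a p.2 * b (p.1 - p.2) :=
    (shear.summable_iff (f := fun p : ℕ × ℤ ↦ a p.1 * b p.2)).mpr
      (summable_mul_of_summable_norm ha hb)
  rw [tsum_mul_tsum_of_summable_norm ha hb, ← shear.tsum_eq]
  exact hsum.tsum_prod

namespace Int

theorem two_mul_triangle (m : ℤ) : 2 * (m * (m - 1) / 2) = m * (m - 1) :=
  two_mul_ediv_two_of_even m.even_mul_pred_self

theorem triangle_add (m k : ℤ) :
    (m + k) * (m + k - 1) / 2 = m * (m - 1) / 2 + k * (k - 1) / 2 + m * k :=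
  mul_left_cancel₀ two_ne_zero <| by
    linear_combination two_mul_triangle (m + k) - two_mul_triangle m - two_mul_triangle k

theorem triangle_neg (m : ℤ) : -m * (-m - 1) / 2 = m * (m - 1) / 2 + m :=
  mul_left_cancel₀ two_ne_zero <| by
    linear_combination two_mul_triangle (-m) - two_mul_triangle m

theorem natCast_triangle (n : ℕ) : ((n * (n - 1) / 2 : ℕ) : ℤ) = n * (n - 1) / 2 := by
  rcases n with _ | n
  · rfl
  · push_cast [Int.natCast_div, Nat.add_sub_cancel]
    ring_nf

end Int

namespace QExp

variable {q : ℂ}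

theorem one_sub_pow_succ_ne_zero (hq : ‖q‖ < 1) (k : ℕ) : 1 - q ^ (k + 1) ≠ 0 := by
  refine sub_ne_zero.mpr fun h ↦ ?_
  have : ‖q ^ (k + 1)‖ < 1 := by
    rw [norm_pow]
    exact pow_lt_one₀ (norm_nonneg q) hq k.succ_ne_zero
  rw [← h, norm_one] at this
  exact lt_irrefl _ this

theorem tendsto_one_sub_pow_succ (hq : ‖q‖ < 1) :
    Tendsto (fun n : ℕ ↦ 1 - q ^ (n + 1)) atTop (𝓝 1) := by
  simpa using tendsto_const_nhds.sub
    ((tendsto_pow_atTop_nhds_zero_of_norm_lt_one hq).comp (tendsto_add_atTop_nat 1))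

theorem qPochQ_succ (q : ℂ) (n : ℕ) : qPochQ q (n + 1) = qPochQ q n * (1 - q ^ (n + 1)) :=
  Finset.prod_range_succ _ _

theorem qPochQ_ne_zero (hq : ‖q‖ < 1) (n : ℕ) : qPochQ q n ≠ 0 :=
  Finset.prod_ne_zero_iff.mpr fun k _ ↦ one_sub_pow_succ_ne_zero hq k

theorem summable_norm_qExp_e_term (hq : ‖q‖ < 1) {x : ℂ} (hx : ‖x‖ < 1) :
    Summable fun n ↦ ‖x ^ n / qPochQ q n‖ := by
  refine summable_norm_of_succ_eq_mul (g := fun n ↦ x / (1 - q ^ (n + 1))) hx ?_ fun n ↦ ?_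
  · simpa [Pi.div_def] using tendsto_const_nhds.div (tendsto_one_sub_pow_succ hq) one_ne_zero
  · have := one_sub_pow_succ_ne_zero hq n
    have := qPochQ_ne_zero hq n
    rw [qPochQ_succ]
    field_simp
    ring

theorem summable_norm_qExp_E_term (hq : ‖q‖ < 1) (x : ℂ) :
    Summable fun n ↦ ‖q ^ (n * (n - 1) / 2) * x ^ n / qPochQ q n‖ := by
  refine summable_norm_of_succ_eq_mul (g := fun n ↦ q ^ n * x / (1 - q ^ (n + 1)))
    (L := 0) (by simp) ?_ fun n ↦ ?_
  · simpa [Pi.div_def] using ((tendsto_pow_atTop_nhds_zero_of_norm_lt_one hq).mul_const x).div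
      (tendsto_one_sub_pow_succ hq) one_ne_zero
  · have := one_sub_pow_succ_ne_zero hq n
    have := qPochQ_ne_zero hq n
    rw [qPochQ_succ, Nat.triangle_succ]
    field_simp
    ring

theorem summable_qExp_E_term (hq : ‖q‖ < 1) (x : ℂ) :
    Summable fun n ↦ q ^ (n * (n - 1) / 2) * x ^ n / qPochQ q n :=
  (summable_norm_qExp_E_term hq x).of_norm

theorem summable_norm_jTheta_term (hq : ‖q‖ < 1) (hq0 : q ≠ 0) (y : ℂ) :
    Summable fun n : ℤ ↦ ‖q ^ (n * (n - 1) / 2) * y ^ n‖ := by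
  have hlim : Tendsto (fun n : ℕ ↦ q ^ n) atTop (𝓝 0) :=
    tendsto_pow_atTop_nhds_zero_of_norm_lt_one hq
  refine .of_nat_of_neg ?_ ?_
  · refine summable_norm_of_succ_eq_mul (g := fun n ↦ q ^ n * y) (L := 0) (by simp)
      (by simpa using hlim.mul_const y) fun n ↦ ?_
    rw [zpow_natCast y, zpow_natCast y, pow_succ, Nat.cast_succ, Int.triangle_add,
      zpow_add₀ hq0, zpow_add₀ hq0]
    norm_num
    ring
  · refine summable_norm_of_succ_eq_mul (g := fun n ↦ q ^ (n + 1) * y⁻¹) (L := 0) (by simp)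
      (by simpa using (hlim.comp (tendsto_add_atTop_nat 1)).mul_const y⁻¹) fun n ↦ ?_
    rw [zpow_neg y, zpow_neg y, zpow_natCast y, zpow_natCast y, pow_succ, mul_inv,
      Nat.cast_succ, neg_add, Int.triangle_add, zpow_add₀ hq0, zpow_add₀ hq0, Int.triangle_neg]
    norm_num
    ring

theorem qExp_E_eq_one_add_mul (hq : ‖q‖ < 1) (x : ℂ) :
    qExp_E q x = (1 + x) * qExp_E q (q * x) := by
  have hx := summable_qExp_E_term hq x
  have hqx := summable_qExp_E_term hq (q * x)
  suffices qExp_E q x - qExp_E q (q * x) = x * qExp_E q (q * x) by linear_combination this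
  rw [qExp_E, qExp_E, ← hx.tsum_sub hqx, (hx.sub hqx).tsum_eq_zero_add, ← tsum_mul_left]
  simp only [pow_zero, mul_one, sub_self, zero_add]
  refine tsum_congr fun n ↦ ?_
  have := one_sub_pow_succ_ne_zero hq n
  have := qPochQ_ne_zero hq n
  rw [qPochQ_succ, Nat.triangle_succ, pow_add]
  field_simp
  ring

theorem qExp_E_eq_prod_mul (hq : ‖q‖ < 1) (x : ℂ) (N : ℕ) :
    qExp_E q x = (∏ k ∈ Finset.range N, (1 + q ^ k * x)) * qExp_E q (q ^ N * x) := by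
  induction N with
  | zero => simp
  | succ n ih =>
    rw [ih, qExp_E_eq_one_add_mul hq (q ^ n * x), ← mul_assoc q, ← pow_succ',
      Finset.prod_range_succ, mul_assoc]

theorem qExp_E_zero (q : ℂ) : qExp_E q 0 = 1 := by
  rw [qExp_E, tsum_eq_single 0 fun n hn ↦ by simp [hn]]
  simp [qPochQ]

theorem tendsto_qExp_E_pow_mul (hq : ‖q‖ < 1) (z : ℂ) :
    Tendsto (fun N : ℕ ↦ qExp_E q (q ^ N * z)) atTop (𝓝 1) := by
  have hlim : Tendsto (fun N : ℕ ↦ q ^ N * z) atTop (𝓝 0) := by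
    simpa using (tendsto_pow_atTop_nhds_zero_of_norm_lt_one hq).mul_const z
  rw [← qExp_E_zero q]
  refine tendsto_tsum_of_dominated_convergence (summable_norm_qExp_E_term hq z)
    (fun n ↦ (((continuous_const.mul (continuous_pow n)).div_const _).tendsto 0).comp hlim)
    (Eventually.of_forall fun N n ↦ ?_)
  have : ‖q‖ ^ N * ‖z‖ ≤ ‖z‖ :=
    mul_le_of_le_one_left (norm_nonneg z) (pow_le_one₀ (norm_nonneg q) hq.le)
  simp only [norm_div, norm_mul, norm_pow]
  gcongr

theorem qExp_E_ne_zero (hq : ‖q‖ < 1) {z : ℂ} (hz : ∀ k : ℕ, 1 + q ^ k * z ≠ 0) :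
    qExp_E q z ≠ 0 := by
  obtain ⟨N, hN⟩ := ((tendsto_qExp_E_pow_mul hq z).eventually_ne one_ne_zero).exists
  rw [qExp_E_eq_prod_mul hq z N]
  exact mul_ne_zero (Finset.prod_ne_zero_iff.mpr fun k _ ↦ hz k) hN

theorem qExp_E_neg_zpow_eq_zero (hq : ‖q‖ < 1) (hq0 : q ≠ 0) {j : ℤ} (hj : j ≤ 0) :
    qExp_E q (-q ^ j) = 0 := by
  obtain ⟨n, rfl⟩ : ∃ n : ℕ, j = -n := ⟨(-j).toNat, by omega⟩
  rw [qExp_E_eq_prod_mul hq _ (n + 1),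
    Finset.prod_eq_zero (Finset.mem_range.mpr n.lt_succ_self), zero_mul]
  simp [hq0]

theorem qExp_E_neg_eq_qPochQ_mul (hq : ‖q‖ < 1) (n : ℕ) :
    qExp_E q (-q) = qPochQ q n * qExp_E q (-q ^ (n + 1)) := by
  rw [qExp_E_eq_prod_mul hq _ n, qPochQ, pow_succ]
  congr 1
  · exact Finset.prod_congr rfl fun k _ ↦ by ring
  · ring_nf

theorem qPochQInf_eq_qExp_E (hq : ‖q‖ < 1) : qPochQInf q = qExp_E q (-q) := by
  have hM : Multipliable fun n : ℕ ↦ 1 - q ^ (n + 1) := by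
    have h : Summable fun n : ℕ ↦ q ^ (n + 1) :=
      (summable_nat_add_iff 1).mpr (summable_geometric_of_norm_lt_one hq)
    simpa [sub_eq_add_neg] using Complex.multipliable_one_add_of_summable h.neg
  have hE : Tendsto (fun N : ℕ ↦ qExp_E q (-q ^ (N + 1))) atTop (𝓝 1) := by
    simpa [pow_succ] using tendsto_qExp_E_pow_mul hq (-q)
  have hlim : Tendsto (fun N ↦ qPochQ q N * qExp_E q (-q ^ (N + 1))) atTop
      (𝓝 (qPochQInf q * 1)) := hM.hasProd.tendsto_prod_nat.mul hE
  simp_rw [← qExp_E_neg_eq_qPochQ_mul hq, mul_one] at hlim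
  exact tendsto_nhds_unique hlim tendsto_const_nhds

theorem qExp_e_term_mul_jTheta_term_sub (hq : ‖q‖ < 1) (hq0 : q ≠ 0) {x : ℂ} (hx0 : x ≠ 0)
    (m : ℤ) (k : ℕ) :
    x ^ k / qPochQ q k * (q ^ ((m - k) * (m - k - 1) / 2) * (-x) ^ (m - k)) =
      q ^ (m * (m - 1) / 2) * (-x) ^ m *
        (q ^ (k * (k - 1) / 2) * (-q ^ (1 - m)) ^ k / qPochQ q k) := by
  have := qPochQ_ne_zero hq k
  rw [sub_eq_add_neg m, Int.triangle_add, Int.triangle_neg, ← Int.natCast_triangle]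
  simp only [zpow_add₀ hq0, zpow_add₀ (neg_ne_zero.mpr hx0), zpow_sub₀ hq0, zpow_neg,
    zpow_natCast, zpow_one, mul_neg, zpow_mul]
  rw [neg_pow x, neg_pow (q / q ^ m), div_pow]
  field_simp
  rw [← pow_mul, pow_mul', neg_one_sq, one_pow, mul_one]

theorem tsum_qExp_e_term_mul_jTheta_term_sub (hq : ‖q‖ < 1) (hq0 : q ≠ 0) {x : ℂ} (hx0 : x ≠ 0)
    (m : ℤ) :
    ∑' k : ℕ, x ^ k / qPochQ q k * (q ^ ((m - k) * (m - k - 1) / 2) * (-x) ^ (m - k)) =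
      q ^ (m * (m - 1) / 2) * (-x) ^ m * qExp_E q (-q ^ (1 - m)) := by
  simp_rw [qExp_e_term_mul_jTheta_term_sub hq hq0 hx0 m, tsum_mul_left, qExp_E]

theorem jTheta_term_neg_mul_qExp_E (hq : ‖q‖ < 1) (hq0 : q ≠ 0) (x : ℂ) (n : ℕ) :
    q ^ (-(n : ℤ) * (-n - 1) / 2) * (-x) ^ (-(n : ℤ)) * qExp_E q (-q ^ (1 - -(n : ℤ))) =
      qExp_E q (-q) * (q ^ (n * (n - 1) / 2) * (-(q / x)) ^ n / qPochQ q n) := by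
  have := qPochQ_ne_zero hq n
  have hE : qExp_E q (-q ^ (n + 1)) = qExp_E q (-q) / qPochQ q n := by
    rw [qExp_E_neg_eq_qPochQ_mul hq n]
    field_simp
  rw [sub_neg_eq_add, add_comm, ← Nat.cast_succ, zpow_natCast, hE, Int.triangle_neg,
    ← Int.natCast_triangle, zpow_add₀ hq0, zpow_neg, zpow_natCast, zpow_natCast, zpow_natCast,
    ← div_neg, div_pow]
  ring

theorem qExp_e_mul_jTheta_neg (hq : ‖q‖ < 1) (hq0 : q ≠ 0) {x : ℂ} (hx0 : x ≠ 0)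
    (hx1 : ‖x‖ < 1) : qExp_e q x * jTheta q (-x) = qExp_E q (-q) * qExp_E q (-(q / x)) := by
  have hsupport : (Function.support fun m : ℤ ↦
      q ^ (m * (m - 1) / 2) * (-x) ^ m * qExp_E q (-q ^ (1 - m))) ⊆
        Set.range fun n : ℕ ↦ -(n : ℤ) := by
    intro m hm
    obtain hm0 | hm0 := le_or_gt m 0
    · exact ⟨(-m).toNat, show -(((-m).toNat : ℕ) : ℤ) = m by omega⟩
    · refine absurd ?_ hm
      dsimp only
      rw [qExp_E_neg_zpow_eq_zero hq hq0 (by omega), mul_zero]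
  calc qExp_e q x * jTheta q (-x)
      = ∑' m : ℤ, ∑' k : ℕ,
          x ^ k / qPochQ q k * (q ^ ((m - k) * (m - k - 1) / 2) * (-x) ^ (m - k)) :=
        tsum_mul_tsum_eq_tsum_tsum_sub (summable_norm_qExp_e_term hq hx1)
          (summable_norm_jTheta_term hq hq0 (-x))
    _ = ∑' m : ℤ, q ^ (m * (m - 1) / 2) * (-x) ^ m * qExp_E q (-q ^ (1 - m)) :=
        tsum_congr (tsum_qExp_e_term_mul_jTheta_term_sub hq hq0 hx0)
    _ = ∑' n : ℕ, q ^ (-(n : ℤ) * (-n - 1) / 2) * (-x) ^ (-(n : ℤ)) *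
          qExp_E q (-q ^ (1 - -(n : ℤ))) :=
        ((neg_injective.comp Nat.cast_injective).tsum_eq hsupport).symm
    _ = qExp_E q (-q) * qExp_E q (-(q / x)) := by
        simp_rw [jTheta_term_neg_mul_qExp_E hq hq0 x, tsum_mul_left, qExp_E]

end QExp

open QExp in
/-- Connection formula between the two q-exponential functions. -/
theorem qExp_connection (q x : ℂ) (hq0 : 0 < ‖q‖) (hq1 : ‖q‖ < 1)
    (hx0 : x ≠ 0) (hx1 : ‖x‖ < 1) (hspiral : ∀ k : ℤ, x ≠ q ^ k) :
    qExp_e q x = qPochQInf q / jTheta q (-x) * qExp_E q (-(q / x)) := by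
  have hq : q ≠ 0 := norm_pos_iff.mp hq0
  have hprod := qExp_e_mul_jTheta_neg hq1 hq hx0 hx1
  have hEq : qExp_E q (-q) ≠ 0 := qExp_E_ne_zero hq1 fun k ↦ by
    simpa [pow_succ, sub_eq_add_neg] using one_sub_pow_succ_ne_zero hq1 k
  have hEx : qExp_E q (-(q / x)) ≠ 0 := qExp_E_ne_zero hq1 fun k h ↦ hspiral (k + 1) <| by
    rw [zpow_add_one₀ hq, zpow_natCast]
    field_simp at h
    linear_combination h
  have hθ : jTheta q (-x) ≠ 0 := fun h ↦ mul_ne_zero hEq hEx (by rw [← hprod, h, mul_zero])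
  rw [qPochQInf_eq_qExp_E hq1, div_mul_eq_mul_div, eq_div_iff hθ, hprod]
end
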